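/- arXiv:0803.2327 — 3 statements merged into one kernel-verified Lean document; each statement's English description precedes it below -/
import Mathlib

section
/- Let F be a closed finite-dimensional subspace of a Hilbert space Ĥ with orthogonal projection p : Ĥ → F, and let G ⊂ Ĥ be a finite-dimensional subspace with dim G = dim F. If the map p^⊥ π^⊥ i^⊥ : F^⊥ → F^⊥ is bijective, where π^⊥ is the orthogonal projection onto G^⊥ and i^⊥ : F^⊥ → Ĥ the inclusion, then p restricts to a linear isomorphism from G onto F. -/
/-- If `F, G` are finite-dimensional subspaces of a Hilbert space with `dim F = dim G`,
and the composite `p^⊥ ∘ π^⊥ ∘ i^⊥ : F^⊥ → F^⊥` (where `p^⊥` is the orthogonal projection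
onto `F^⊥`, `π^⊥` that onto `G^⊥` and `i^⊥ : F^⊥ → Ĥ` the inclusion) is bijective, then
the orthogonal projection `p` onto `F` restricts to a linear isomorphism from `G` onto
`F`. -/
theorem stmt8 (H : Type*) [NormedAddCommGroup H] [InnerProductSpace ℂ H] [CompleteSpace H]
    (F G : Submodule ℂ H) [FiniteDimensional ℂ F] [FiniteDimensional ℂ G]
    (hdim : Module.finrank ℂ F = Module.finrank ℂ G)
    (hbij : Function.Bijective fun v : Fᗮ =>
      Submodule.orthogonalProjectionOnto Fᗮ ((Submodule.orthogonalProjectionOnto Gᗮ (v : H) : H))) :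
    Function.Bijective fun g : G => Submodule.orthogonalProjectionOnto F (g : H) := by
  set f : G →ₗ[ℂ] F :=
    ((Submodule.orthogonalProjectionOnto F).toLinearMap.comp (G.subtype)) with hf
  have hinj : Function.Injective f := by
    rw [← LinearMap.ker_eq_bot, LinearMap.ker_eq_bot']
    intro g hg
    have hgF : (g : H) ∈ Fᗮ := by
      have : Submodule.orthogonalProjectionOnto F (g : H) = 0 := hg
      rwa [Submodule.orthogonalProjectionOnto_eq_zero_iff] at this
    have hGproj : Submodule.orthogonalProjectionOnto Gᗮ (g : H) = 0 := by
      apply Submodule.orthogonalProjectionOnto_apply_of_mem_orthogonal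
      exact Submodule.le_orthogonal_orthogonal G g.2
    have h0 : (fun v : Fᗮ =>
        Submodule.orthogonalProjectionOnto Fᗮ ((Submodule.orthogonalProjectionOnto Gᗮ (v : H) : H))) ⟨(g : H), hgF⟩
        = (fun v : Fᗮ =>
        Submodule.orthogonalProjectionOnto Fᗮ ((Submodule.orthogonalProjectionOnto Gᗮ (v : H) : H))) 0 := by
      simp [hGproj]
    have := hbij.injective h0
    have hg0 : (g : H) = 0 := congrArg Subtype.val this
    exact Subtype.ext hg0
  have hsurj : Function.Surjective f :=
    (LinearMap.injective_iff_surjective_of_finrank_eq_finrank hdim.symm).mp hinj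
  exact ⟨hinj, hsurj⟩
end

section
/- Let F₀, F₁ be finite-dimensional ℤ₂-graded inner product spaces with self-adjoint degree-1 maps h₀, h₁ and an even isometric isomorphism g : (F₀)_{<λ} → (F₁)_{<λ} intertwining h₀ and h₁ on the parts below λ. Let {ρ₀², ρ_∞²} be continuous nonnegative functions on [0,∞) with ρ₀² + ρ_∞² = 1, ρ₀ supported in [0,λ), ρ_∞ supported in (0,∞). Then the operator h̃ = (g ρ₀(h₀²) + g⁻¹ ρ₀(h₁²)) + (sgn(h₀) ρ_∞(h₀²) − sgn(h₁) ρ_∞(h₁²)) on F₀ ⊕ F₁ satisfies h̃² = 1; in particular h̃ is a degree-1 isomorphism and induces an isomorphism F₀⁰ ⊕ F₁¹ ≅ F₀¹ ⊕ F₁⁰. -/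
/-- Furuta's gluing operator `h̃ = (gρ₀(h₀²) + g⁻¹ρ₀(h₁²)) + (sgn(h₀)ρ_∞(h₀²) −
sgn(h₁)ρ_∞(h₁²))` on `F₀ ⊕ F₁`, expressed in terms of the operators `P_i = ρ₀(h_i²)`,
`Q_i = sgn(h_i)ρ_∞(h_i²)` and the comparison maps `G = g∘-`, `G' = g⁻¹∘-`:
`h̃ (v, w) = (Q₀ v + G' (P₁ w), G (P₀ v) − Q₁ w)`. -/
noncomputable def htilde {F0 F1 : Type*} [NormedAddCommGroup F0] [InnerProductSpace ℂ F0]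
    [NormedAddCommGroup F1] [InnerProductSpace ℂ F1]
    (P0 Q0 : F0 →ₗ[ℂ] F0) (P1 Q1 : F1 →ₗ[ℂ] F1)
    (G : F0 →ₗ[ℂ] F1) (G' : F1 →ₗ[ℂ] F0) : (F0 × F1) →ₗ[ℂ] (F0 × F1) :=
  LinearMap.prod
    (Q0.comp (LinearMap.fst ℂ F0 F1) + (G'.comp P1).comp (LinearMap.snd ℂ F0 F1))
    ((G.comp P0).comp (LinearMap.fst ℂ F0 F1) - Q1.comp (LinearMap.snd ℂ F0 F1))

open Module

section Helpers

variable {F : Type*} [NormedAddCommGroup F] [InnerProductSpace ℂ F]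

/-- Every vector lies in a submodule containing all eigenvectors of a symmetric map. -/
lemma furuta_eigen_ext [FiniteDimensional ℂ F] (h : F →ₗ[ℂ] F) (hsa : h.IsSymmetric)
    (S : Submodule ℂ F) (hS : ∀ (l : ℝ) (v : F), h v = (l : ℂ) • v → v ∈ S) (v : F) : v ∈ S := by
  have hn : Module.finrank ℂ F = Module.finrank ℂ F := rfl
  set b := hsa.eigenvectorBasis hn with hb
  have hmem : ∀ i, b i ∈ S := fun i => hS (hsa.eigenvalues hn i) (b i)
    (hsa.apply_eigenvectorBasis hn i)
  have htop : (⊤ : Submodule ℂ F) ≤ S := by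
    rw [← b.toBasis.span_eq]
    refine Submodule.span_le.mpr (Set.range_subset_iff.mpr ?_)
    intro i; simpa using hmem i
  exact htop trivial

lemma furuta_eigsq (h : F →ₗ[ℂ] F) {l : ℝ} {v : F} (hv : h v = (l : ℂ) • v) :
    v ∈ Module.End.eigenspace (h ^ 2) (((l ^ 2 : ℝ)) : ℂ) := by
  rw [Module.End.mem_eigenspace_iff]
  have h2 : (h ^ 2) v = h (h v) := by rw [pow_two]; rfl
  rw [h2, hv, map_smul, hv, smul_smul]
  push_cast; ring_nf

lemma furuta_sup_inv (h : F →ₗ[ℂ] F) (lam : ℝ) {v : F}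
    (hv : v ∈ ⨆ l : {l : ℝ // l < lam}, Module.End.eigenspace (h ^ 2) (l : ℂ)) :
    h v ∈ ⨆ l : {l : ℝ // l < lam}, Module.End.eigenspace (h ^ 2) (l : ℂ) := by
  have hle : (⨆ l : {l : ℝ // l < lam}, Module.End.eigenspace (h ^ 2) (l : ℂ)) ≤
      Submodule.comap h (⨆ l : {l : ℝ // l < lam}, Module.End.eigenspace (h ^ 2) (l : ℂ)) := by
    refine iSup_le fun i => ?_
    intro x hx
    refine Submodule.mem_comap.mpr (Submodule.mem_iSup_of_mem i ?_)
    rw [Module.End.mem_eigenspace_iff] at hx ⊢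
    have h2 : (h ^ 2) (h x) = h ((h ^ 2) x) := rfl
    rw [h2, hx, map_smul]
  exact hle hv

variable (p q : Submodule ℂ F)

/-- The grading involution attached to a complement pair. -/
noncomputable def furutaEps (hc : IsCompl p q) : F →ₗ[ℂ] F :=
  p.subtype ∘ₗ p.projectionOnto q hc - q.subtype ∘ₗ q.projectionOnto p hc.symm

variable {p q}

lemma furutaEps_left (hc : IsCompl p q) {v : F} (hv : v ∈ p) : furutaEps p q hc v = v := by
  simp [furutaEps, Submodule.linearProjOfIsCompl_apply_left hc ⟨v, hv⟩,
    Submodule.linearProjOfIsCompl_apply_right' hc.symm hv,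
    Submodule.projection_apply_of_mem_left hc hv, Submodule.projection_apply_of_mem_right hc.symm hv]

lemma furutaEps_right (hc : IsCompl p q) {v : F} (hv : v ∈ q) : furutaEps p q hc v = -v := by
  simp [furutaEps, Submodule.linearProjOfIsCompl_apply_right' hc hv,
    Submodule.projection_apply_of_mem_left hc.symm hv, Submodule.projection_apply_of_mem_right hc hv,
    Submodule.linearProjOfIsCompl_apply_left hc.symm ⟨v, hv⟩]

lemma furutaEps_mem_left (hc : IsCompl p q) {v : F} (hv : furutaEps p q hc v = v) : v ∈ p := by
  have hd : (p.projectionOnto q hc v : F) + (q.projectionOnto p hc.symm v : F) = v :=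
    Submodule.projection_add_projection_eq_self hc v
  set a := (p.projectionOnto q hc v : F) with ha
  set b := (q.projectionOnto p hc.symm v : F) with hb
  have hv' : a - b = v := by simpa [furutaEps, ha, hb] using hv
  have h2 : (2 : ℂ) • b = 0 := by
    calc (2 : ℂ) • b = b + b := two_smul ℂ b
      _ = (a + b) - (a - b) := by abel
      _ = v - v := by rw [hd, hv']
      _ = 0 := sub_self v
  have h3 : b = 0 := by
    rcases smul_eq_zero.mp h2 with h | h
    · exact absurd h (by norm_num)
    · exact h
  have hva : v = a := by rw [← hd, h3, add_zero]
  rw [hva]; exact Submodule.coe_mem _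

lemma furutaEps_mem_right (hc : IsCompl p q) {v : F} (hv : furutaEps p q hc v = -v) : v ∈ q := by
  have hd : (p.projectionOnto q hc v : F) + (q.projectionOnto p hc.symm v : F) = v :=
    Submodule.projection_add_projection_eq_self hc v
  set a := (p.projectionOnto q hc v : F) with ha
  set b := (q.projectionOnto p hc.symm v : F) with hb
  have hv' : a - b = -v := by simpa [furutaEps, ha, hb] using hv
  have h2 : (2 : ℂ) • a = 0 := by
    calc (2 : ℂ) • a = a + a := two_smul ℂ a
      _ = (a + b) + (a - b) := by abel
      _ = v + -v := by rw [hd, hv']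
      _ = 0 := add_neg_cancel v
  have h3 : a = 0 := by
    rcases smul_eq_zero.mp h2 with h | h
    · exact absurd h (by norm_num)
    · exact h
  have hvb : v = b := by rw [← hd, h3, zero_add]
  rw [hvb]; exact Submodule.coe_mem _

lemma furutaEps_anticomm (hc : IsCompl p q) (h : F →ₗ[ℂ] F)
    (hodd : (∀ v ∈ p, h v ∈ q) ∧ (∀ v ∈ q, h v ∈ p)) (v : F) :
    h (furutaEps p q hc v) = - furutaEps p q hc (h v) := by
  have hd : (p.projectionOnto q hc v : F) + (q.projectionOnto p hc.symm v : F) = v :=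
    Submodule.projection_add_projection_eq_self hc v
  set a := (p.projectionOnto q hc v : F) with ha
  set b := (q.projectionOnto p hc.symm v : F) with hb
  have hav : a ∈ p := Submodule.coe_mem _
  have hbv : b ∈ q := Submodule.coe_mem _
  have heps : furutaEps p q hc v = a - b := by simp [furutaEps, ha, hb]
  have hv' : v = a + b := hd.symm
  have h1 : furutaEps p q hc (h a) = -(h a) := furutaEps_right hc (hodd.1 a hav)
  have h2 : furutaEps p q hc (h b) = h b := furutaEps_left hc (hodd.2 b hbv)
  rw [heps, hv', map_sub, map_add, map_add, h1, h2]
  abel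

end Helpers

/-- Let `F₀, F₁` be finite-dimensional ℤ₂-graded complex inner product spaces with
self-adjoint degree-1 maps `h₀, h₁`, and `g` an even isometric isomorphism between the
parts of `F₀` and `F₁` below `λ`, intertwining `h₀` and `h₁` there. With `{ρ₀², ρ_∞²}` a
partition of unity on `[0,∞)`, `ρ₀` supported in `[0,λ)` and `ρ_∞` in `(0,∞)`, the
operator `h̃ = (gρ₀(h₀²) + g⁻¹ρ₀(h₁²)) + (sgn(h₀)ρ_∞(h₀²) − sgn(h₁)ρ_∞(h₁²))` satisfies
`h̃² = 1`; in particular it is a degree-1 isomorphism inducing `F₀⁰ ⊕ F₁¹ ≅ F₀¹ ⊕ F₁⁰`. -/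
theorem stmt15 (F0 F1 : Type*) [NormedAddCommGroup F0] [InnerProductSpace ℂ F0]
    [NormedAddCommGroup F1] [InnerProductSpace ℂ F1]
    [FiniteDimensional ℂ F0] [FiniteDimensional ℂ F1]
    (F00 F01 : Submodule ℂ F0) (hc0 : IsCompl F00 F01) (ho0 : F01 = F00ᗮ)
    (F10 F11 : Submodule ℂ F1) (hc1 : IsCompl F10 F11) (ho1 : F11 = F10ᗮ)
    (h0 : F0 →ₗ[ℂ] F0) (h0sa : LinearMap.IsSymmetric h0)
    (h0odd : (∀ v ∈ F00, h0 v ∈ F01) ∧ (∀ v ∈ F01, h0 v ∈ F00))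
    (h1 : F1 →ₗ[ℂ] F1) (h1sa : LinearMap.IsSymmetric h1)
    (h1odd : (∀ v ∈ F10, h1 v ∈ F11) ∧ (∀ v ∈ F11, h1 v ∈ F10))
    (lam : ℝ) (hlam : 0 < lam)
    (ρ0 ρinf : ℝ → ℝ) (hρ0c : Continuous ρ0) (hρinfc : Continuous ρinf)
    (hρ0nn : ∀ l, 0 ≤ ρ0 l) (hρinfnn : ∀ l, 0 ≤ ρinf l)
    (hpart : ∀ l : ℝ, 0 ≤ l → ρ0 l ^ 2 + ρinf l ^ 2 = 1)
    (hρ0supp : ∀ l : ℝ, lam ≤ l → ρ0 l = 0) (hρinf0 : ρinf 0 = 0)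
    (P0 : F0 →ₗ[ℂ] F0)
    (hP0 : ∀ (l : ℝ) (v : F0), v ∈ Module.End.eigenspace (h0 ^ 2) (l : ℂ) →
      P0 v = ((ρ0 l : ℝ) : ℂ) • v)
    (P1 : F1 →ₗ[ℂ] F1)
    (hP1 : ∀ (l : ℝ) (v : F1), v ∈ Module.End.eigenspace (h1 ^ 2) (l : ℂ) →
      P1 v = ((ρ0 l : ℝ) : ℂ) • v)
    (Q0 : F0 →ₗ[ℂ] F0)
    (hQ0 : ∀ (l : ℝ) (v : F0), v ∈ Module.End.eigenspace h0 (l : ℂ) →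
      Q0 v = ((Real.sign l * ρinf (l ^ 2) : ℝ) : ℂ) • v)
    (Q1 : F1 →ₗ[ℂ] F1)
    (hQ1 : ∀ (l : ℝ) (v : F1), v ∈ Module.End.eigenspace h1 (l : ℂ) →
      Q1 v = ((Real.sign l * ρinf (l ^ 2) : ℝ) : ℂ) • v)
    (G : F0 →ₗ[ℂ] F1) (G' : F1 →ₗ[ℂ] F0)
    (hG : ∀ v ∈ ⨆ l : {l : ℝ // l < lam}, Module.End.eigenspace (h0 ^ 2) (l : ℂ),
      G v ∈ (⨆ l : {l : ℝ // l < lam}, Module.End.eigenspace (h1 ^ 2) (l : ℂ)) ∧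
        ‖G v‖ = ‖v‖ ∧ G (h0 v) = h1 (G v) ∧ G' (G v) = v)
    (hG' : ∀ w ∈ ⨆ l : {l : ℝ // l < lam}, Module.End.eigenspace (h1 ^ 2) (l : ℂ),
      G' w ∈ (⨆ l : {l : ℝ // l < lam}, Module.End.eigenspace (h0 ^ 2) (l : ℂ)) ∧
        G (G' w) = w)
    (hGeven :
      (∀ v ∈ ⨆ l : {l : ℝ // l < lam}, Module.End.eigenspace (h0 ^ 2) (l : ℂ),
        v ∈ F00 → G v ∈ F10) ∧
      (∀ v ∈ ⨆ l : {l : ℝ // l < lam}, Module.End.eigenspace (h0 ^ 2) (l : ℂ),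
        v ∈ F01 → G v ∈ F11))
    (hG'even :
      (∀ w ∈ ⨆ l : {l : ℝ // l < lam}, Module.End.eigenspace (h1 ^ 2) (l : ℂ),
        w ∈ F10 → G' w ∈ F00) ∧
      (∀ w ∈ ⨆ l : {l : ℝ // l < lam}, Module.End.eigenspace (h1 ^ 2) (l : ℂ),
        w ∈ F11 → G' w ∈ F01)) :
    (htilde P0 Q0 P1 Q1 G G') ∘ₗ (htilde P0 Q0 P1 Q1 G G') = LinearMap.id ∧
      (∀ v w, v ∈ F00 → w ∈ F11 →
        ((htilde P0 Q0 P1 Q1 G G') (v, w)).1 ∈ F01 ∧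
          ((htilde P0 Q0 P1 Q1 G G') (v, w)).2 ∈ F10) ∧
      (∀ v w, v ∈ F01 → w ∈ F10 →
        ((htilde P0 Q0 P1 Q1 G G') (v, w)).1 ∈ F00 ∧
          ((htilde P0 Q0 P1 Q1 G G') (v, w)).2 ∈ F11) ∧
      Function.Bijective (htilde P0 Q0 P1 Q1 G G') ∧
      Module.finrank ℂ F00 + Module.finrank ℂ F11 =
        Module.finrank ℂ F01 + Module.finrank ℂ F10 := by
  -- scalar identities
  have hs : ∀ l : ℝ, (Real.sign l * ρinf (l ^ 2)) ^ 2 = ρinf (l ^ 2) ^ 2 := by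
    intro l
    rcases lt_trichotomy l 0 with h | h | h
    · rw [Real.sign_of_neg h]; ring
    · subst h; simp [Real.sign_zero, hρinf0]
    · rw [Real.sign_of_pos h]; ring
  have honeR : ∀ l : ℝ, ¬ l ^ 2 < lam →
      (Real.sign l * ρinf (l ^ 2)) * (Real.sign l * ρinf (l ^ 2)) = 1 := by
    intro l hl
    have h1 : ρ0 (l ^ 2) = 0 := hρ0supp _ (le_of_not_gt hl)
    have h2 := hpart (l ^ 2) (sq_nonneg l)
    have h3 := hs l
    nlinarith [h3, h2]
  have hsumR : ∀ l : ℝ,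
      (Real.sign l * ρinf (l ^ 2)) * (Real.sign l * ρinf (l ^ 2)) +
        ρ0 (l ^ 2) * ρ0 (l ^ 2) = 1 := by
    intro l
    have h2 := hpart (l ^ 2) (sq_nonneg l)
    have h3 := hs l
    nlinarith [h3, h2]
  -- identity 1 : Q0² + G'P1GP0 = 1 on F0
  have id1 : ∀ v : F0, Q0 (Q0 v) + G' (P1 (G (P0 v))) = v := by
    have main : ∀ (l : ℝ) (u : F0), h0 u = (l : ℂ) • u →
        u ∈ LinearMap.eqLocus (Q0 ∘ₗ Q0 + G' ∘ₗ (P1 ∘ₗ (G ∘ₗ P0))) LinearMap.id := by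
      intro l u hu
      rw [LinearMap.mem_eqLocus]
      simp only [LinearMap.add_apply, LinearMap.comp_apply, LinearMap.id_apply]
      have hu2 := furuta_eigsq h0 hu
      have hP0u : P0 u = ((ρ0 (l ^ 2) : ℝ) : ℂ) • u := hP0 _ u hu2
      have hQ0u : Q0 u = ((Real.sign l * ρinf (l ^ 2) : ℝ) : ℂ) • u :=
        hQ0 l u (Module.End.mem_eigenspace_iff.mpr hu)
      by_cases hcl : l ^ 2 < lam
      · have hsup : u ∈ ⨆ l : {l : ℝ // l < lam}, Module.End.eigenspace (h0 ^ 2) (l : ℂ) :=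
          Submodule.mem_iSup_of_mem ⟨l ^ 2, hcl⟩ hu2
        obtain ⟨hGsup, -, hGh, hG'G⟩ := hG u hsup
        have hGu : h1 (G u) = (l : ℂ) • G u := by rw [← hGh, hu, map_smul]
        have hP1Gu : P1 (G u) = ((ρ0 (l ^ 2) : ℝ) : ℂ) • G u := hP1 _ _ (furuta_eigsq h1 hGu)
        simp only [hQ0u, hP0u, hP1Gu, hG'G, map_smul, smul_smul]
        rw [← add_smul]
        have hsc : ((Real.sign l * ρinf (l ^ 2) : ℝ) : ℂ) * ((Real.sign l * ρinf (l ^ 2) : ℝ) : ℂ)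
            + ((ρ0 (l ^ 2) : ℝ) : ℂ) * ((ρ0 (l ^ 2) : ℝ) : ℂ) = 1 := by
          norm_cast; exact hsumR l
        rw [hsc, one_smul]
      · have hP0u0 : P0 u = 0 := by
          rw [hP0u, hρ0supp _ (le_of_not_gt hcl)]; simp
        simp only [hP0u0, map_zero, add_zero, hQ0u, map_smul, smul_smul]
        have hsc : ((Real.sign l * ρinf (l ^ 2) : ℝ) : ℂ) *
            ((Real.sign l * ρinf (l ^ 2) : ℝ) : ℂ) = 1 := by
          norm_cast; exact honeR l hcl
        rw [hsc, one_smul]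
    intro v
    have hv := furuta_eigen_ext h0 h0sa _ main v
    rw [LinearMap.mem_eqLocus] at hv
    simpa using hv
  -- identity 2 : G P0 Q0 = Q1 G P0 on F0
  have id2 : ∀ v : F0, G (P0 (Q0 v)) = Q1 (G (P0 v)) := by
    have main : ∀ (l : ℝ) (u : F0), h0 u = (l : ℂ) • u →
        u ∈ LinearMap.eqLocus (G ∘ₗ (P0 ∘ₗ Q0)) (Q1 ∘ₗ (G ∘ₗ P0)) := by
      intro l u hu
      rw [LinearMap.mem_eqLocus]
      simp only [LinearMap.comp_apply]
      have hu2 := furuta_eigsq h0 hu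
      have hP0u : P0 u = ((ρ0 (l ^ 2) : ℝ) : ℂ) • u := hP0 _ u hu2
      have hQ0u : Q0 u = ((Real.sign l * ρinf (l ^ 2) : ℝ) : ℂ) • u :=
        hQ0 l u (Module.End.mem_eigenspace_iff.mpr hu)
      by_cases hcl : l ^ 2 < lam
      · have hsup : u ∈ ⨆ l : {l : ℝ // l < lam}, Module.End.eigenspace (h0 ^ 2) (l : ℂ) :=
          Submodule.mem_iSup_of_mem ⟨l ^ 2, hcl⟩ hu2
        obtain ⟨hGsup, -, hGh, hG'G⟩ := hG u hsup
        have hGu : h1 (G u) = (l : ℂ) • G u := by rw [← hGh, hu, map_smul]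
        have hQ1Gu : Q1 (G u) = ((Real.sign l * ρinf (l ^ 2) : ℝ) : ℂ) • G u :=
          hQ1 l _ (Module.End.mem_eigenspace_iff.mpr hGu)
        simp only [hQ0u, hP0u, hQ1Gu, map_smul, smul_smul]
        rw [mul_comm]
      · have hP0u0 : P0 u = 0 := by
          rw [hP0u, hρ0supp _ (le_of_not_gt hcl)]; simp
        simp only [hQ0u, hP0u0, map_smul, map_zero, smul_zero]
    intro v
    have hv := furuta_eigen_ext h0 h0sa _ main v
    rw [LinearMap.mem_eqLocus] at hv
    simpa using hv
  -- identity 3 : G P0 G' P1 + Q1² = 1 on F1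
  have id3 : ∀ w : F1, G (P0 (G' (P1 w))) + Q1 (Q1 w) = w := by
    have main : ∀ (l : ℝ) (u : F1), h1 u = (l : ℂ) • u →
        u ∈ LinearMap.eqLocus (G ∘ₗ (P0 ∘ₗ (G' ∘ₗ P1)) + Q1 ∘ₗ Q1) LinearMap.id := by
      intro l u hu
      rw [LinearMap.mem_eqLocus]
      simp only [LinearMap.add_apply, LinearMap.comp_apply, LinearMap.id_apply]
      have hu2 := furuta_eigsq h1 hu
      have hP1u : P1 u = ((ρ0 (l ^ 2) : ℝ) : ℂ) • u := hP1 _ u hu2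
      have hQ1u : Q1 u = ((Real.sign l * ρinf (l ^ 2) : ℝ) : ℂ) • u :=
        hQ1 l u (Module.End.mem_eigenspace_iff.mpr hu)
      by_cases hcl : l ^ 2 < lam
      · have hsup : u ∈ ⨆ l : {l : ℝ // l < lam}, Module.End.eigenspace (h1 ^ 2) (l : ℂ) :=
          Submodule.mem_iSup_of_mem ⟨l ^ 2, hcl⟩ hu2
        obtain ⟨hG'sup, hGG'⟩ := hG' u hsup
        obtain ⟨-, -, hGhu, -⟩ := hG (G' u) hG'sup
        obtain ⟨-, -, -, hG'Ghu⟩ := hG (h0 (G' u)) (furuta_sup_inv h0 lam hG'sup)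
        have hueig : h0 (G' u) = (l : ℂ) • G' u := by
          conv_lhs => rw [← hG'Ghu, hGhu, hGG', hu, map_smul]
        have hP0G'u : P0 (G' u) = ((ρ0 (l ^ 2) : ℝ) : ℂ) • G' u :=
          hP0 _ _ (furuta_eigsq h0 hueig)
        simp only [hQ1u, hP1u, hP0G'u, hGG', map_smul, smul_smul]
        rw [← add_smul]
        have hsc : ((ρ0 (l ^ 2) : ℝ) : ℂ) * ((ρ0 (l ^ 2) : ℝ) : ℂ) +
            ((Real.sign l * ρinf (l ^ 2) : ℝ) : ℂ) * ((Real.sign l * ρinf (l ^ 2) : ℝ) : ℂ)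
            = 1 := by
          norm_cast
          have := hsumR l; linarith
        rw [hsc, one_smul]
      · have hP1u0 : P1 u = 0 := by
          rw [hP1u, hρ0supp _ (le_of_not_gt hcl)]; simp
        simp only [hP1u0, map_zero, zero_add, hQ1u, map_smul, smul_smul]
        have hsc : ((Real.sign l * ρinf (l ^ 2) : ℝ) : ℂ) *
            ((Real.sign l * ρinf (l ^ 2) : ℝ) : ℂ) = 1 := by
          norm_cast; exact honeR l hcl
        rw [hsc, one_smul]
    intro w
    have hw := furuta_eigen_ext h1 h1sa _ main w
    rw [LinearMap.mem_eqLocus] at hw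
    simpa using hw
  -- identity 4 : Q0 G' P1 = G' P1 Q1 on F1
  have id4 : ∀ w : F1, Q0 (G' (P1 w)) = G' (P1 (Q1 w)) := by
    have main : ∀ (l : ℝ) (u : F1), h1 u = (l : ℂ) • u →
        u ∈ LinearMap.eqLocus (Q0 ∘ₗ (G' ∘ₗ P1)) (G' ∘ₗ (P1 ∘ₗ Q1)) := by
      intro l u hu
      rw [LinearMap.mem_eqLocus]
      simp only [LinearMap.comp_apply]
      have hu2 := furuta_eigsq h1 hu
      have hP1u : P1 u = ((ρ0 (l ^ 2) : ℝ) : ℂ) • u := hP1 _ u hu2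
      have hQ1u : Q1 u = ((Real.sign l * ρinf (l ^ 2) : ℝ) : ℂ) • u :=
        hQ1 l u (Module.End.mem_eigenspace_iff.mpr hu)
      by_cases hcl : l ^ 2 < lam
      · have hsup : u ∈ ⨆ l : {l : ℝ // l < lam}, Module.End.eigenspace (h1 ^ 2) (l : ℂ) :=
          Submodule.mem_iSup_of_mem ⟨l ^ 2, hcl⟩ hu2
        obtain ⟨hG'sup, hGG'⟩ := hG' u hsup
        obtain ⟨-, -, hGhu, -⟩ := hG (G' u) hG'sup
        obtain ⟨-, -, -, hG'Ghu⟩ := hG (h0 (G' u)) (furuta_sup_inv h0 lam hG'sup)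
        have hueig : h0 (G' u) = (l : ℂ) • G' u := by
          conv_lhs => rw [← hG'Ghu, hGhu, hGG', hu, map_smul]
        have hQ0G'u : Q0 (G' u) = ((Real.sign l * ρinf (l ^ 2) : ℝ) : ℂ) • G' u :=
          hQ0 l _ (Module.End.mem_eigenspace_iff.mpr hueig)
        simp only [hP1u, hQ1u, hQ0G'u, map_smul, smul_smul]
        rw [mul_comm]
      · have hP1u0 : P1 u = 0 := by
          rw [hP1u, hρ0supp _ (le_of_not_gt hcl)]; simp
        simp only [hP1u0, hQ1u, map_smul, map_zero, smul_zero]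
    intro w
    have hw := furuta_eigen_ext h1 h1sa _ main w
    rw [LinearMap.mem_eqLocus] at hw
    simpa using hw
  -- componentwise h̃² = 1
  have hcomp1 : ∀ (v : F0) (w : F1),
      Q0 (Q0 v + G' (P1 w)) + G' (P1 (G (P0 v) - Q1 w)) = v := by
    intro v w
    simp only [map_add, map_sub]
    rw [id4 w]
    conv_rhs => rw [← id1 v]
    abel
  have hcomp2 : ∀ (v : F0) (w : F1),
      G (P0 (Q0 v + G' (P1 w))) - Q1 (G (P0 v) - Q1 w) = w := by
    intro v w
    simp only [map_add, map_sub]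
    rw [id2 v]
    conv_rhs => rw [← id3 w]
    abel
  have happ : ∀ (v : F0) (w : F1),
      htilde P0 Q0 P1 Q1 G G' (v, w) = (Q0 v + G' (P1 w), G (P0 v) - Q1 w) := by
    intro v w
    simp [htilde, LinearMap.prod_apply, Function.prod, LinearMap.codRestrict_apply]
  have hTT : ∀ x : F0 × F1,
      htilde P0 Q0 P1 Q1 G G' (htilde P0 Q0 P1 Q1 G G' x) = x := by
    rintro ⟨v, w⟩
    rw [happ, happ]
    exact Prod.ext (hcomp1 v w) (hcomp2 v w)
  -- parity of P's and Q's
  have hQ0eps : ∀ v : F0,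
      Q0 (furutaEps F00 F01 hc0 v) = - furutaEps F00 F01 hc0 (Q0 v) := by
    have main : ∀ (l : ℝ) (u : F0), h0 u = (l : ℂ) • u →
        u ∈ LinearMap.eqLocus (Q0 ∘ₗ furutaEps F00 F01 hc0)
          (-(furutaEps F00 F01 hc0 ∘ₗ Q0)) := by
      intro l u hu
      rw [LinearMap.mem_eqLocus]
      simp only [LinearMap.comp_apply, LinearMap.neg_apply]
      have heu : h0 (furutaEps F00 F01 hc0 u) = ((-l : ℝ) : ℂ) • furutaEps F00 F01 hc0 u := by
        rw [furutaEps_anticomm hc0 h0 h0odd u, hu, map_smul]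
        push_cast
        simp [neg_smul]
      have hQeps : Q0 (furutaEps F00 F01 hc0 u) =
          ((Real.sign (-l) * ρinf ((-l) ^ 2) : ℝ) : ℂ) • furutaEps F00 F01 hc0 u :=
        hQ0 (-l) _ (Module.End.mem_eigenspace_iff.mpr heu)
      have hQ0u : Q0 u = ((Real.sign l * ρinf (l ^ 2) : ℝ) : ℂ) • u :=
        hQ0 l u (Module.End.mem_eigenspace_iff.mpr hu)
      rw [hQeps, hQ0u, map_smul]
      have hsc : ((Real.sign (-l) * ρinf ((-l) ^ 2) : ℝ) : ℂ) =
          -((Real.sign l * ρinf (l ^ 2) : ℝ) : ℂ) := by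
        rw [Real.sign_neg, neg_sq]; push_cast; ring
      rw [hsc, neg_smul]
    intro v
    have hv := furuta_eigen_ext h0 h0sa _ main v
    rw [LinearMap.mem_eqLocus] at hv
    simpa using hv
  have hP0eps : ∀ v : F0,
      P0 (furutaEps F00 F01 hc0 v) = furutaEps F00 F01 hc0 (P0 v) := by
    have main : ∀ (l : ℝ) (u : F0), h0 u = (l : ℂ) • u →
        u ∈ LinearMap.eqLocus (P0 ∘ₗ furutaEps F00 F01 hc0)
          (furutaEps F00 F01 hc0 ∘ₗ P0) := by
      intro l u hu
      rw [LinearMap.mem_eqLocus]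
      simp only [LinearMap.comp_apply]
      have heu : h0 (furutaEps F00 F01 hc0 u) = ((-l : ℝ) : ℂ) • furutaEps F00 F01 hc0 u := by
        rw [furutaEps_anticomm hc0 h0 h0odd u, hu, map_smul]
        push_cast
        simp [neg_smul]
      have hPeps : P0 (furutaEps F00 F01 hc0 u) =
          ((ρ0 ((-l) ^ 2) : ℝ) : ℂ) • furutaEps F00 F01 hc0 u :=
        hP0 _ _ (furuta_eigsq h0 heu)
      have hP0u : P0 u = ((ρ0 (l ^ 2) : ℝ) : ℂ) • u := hP0 _ u (furuta_eigsq h0 hu)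
      rw [hPeps, hP0u, map_smul, neg_sq]
    intro v
    have hv := furuta_eigen_ext h0 h0sa _ main v
    rw [LinearMap.mem_eqLocus] at hv
    simpa using hv
  have hQ1eps : ∀ w : F1,
      Q1 (furutaEps F10 F11 hc1 w) = - furutaEps F10 F11 hc1 (Q1 w) := by
    have main : ∀ (l : ℝ) (u : F1), h1 u = (l : ℂ) • u →
        u ∈ LinearMap.eqLocus (Q1 ∘ₗ furutaEps F10 F11 hc1)
          (-(furutaEps F10 F11 hc1 ∘ₗ Q1)) := by
      intro l u hu
      rw [LinearMap.mem_eqLocus]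
      simp only [LinearMap.comp_apply, LinearMap.neg_apply]
      have heu : h1 (furutaEps F10 F11 hc1 u) = ((-l : ℝ) : ℂ) • furutaEps F10 F11 hc1 u := by
        rw [furutaEps_anticomm hc1 h1 h1odd u, hu, map_smul]
        push_cast
        simp [neg_smul]
      have hQeps : Q1 (furutaEps F10 F11 hc1 u) =
          ((Real.sign (-l) * ρinf ((-l) ^ 2) : ℝ) : ℂ) • furutaEps F10 F11 hc1 u :=
        hQ1 (-l) _ (Module.End.mem_eigenspace_iff.mpr heu)
      have hQ1u : Q1 u = ((Real.sign l * ρinf (l ^ 2) : ℝ) : ℂ) • u :=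
        hQ1 l u (Module.End.mem_eigenspace_iff.mpr hu)
      rw [hQeps, hQ1u, map_smul]
      have hsc : ((Real.sign (-l) * ρinf ((-l) ^ 2) : ℝ) : ℂ) =
          -((Real.sign l * ρinf (l ^ 2) : ℝ) : ℂ) := by
        rw [Real.sign_neg, neg_sq]; push_cast; ring
      rw [hsc, neg_smul]
    intro w
    have hw := furuta_eigen_ext h1 h1sa _ main w
    rw [LinearMap.mem_eqLocus] at hw
    simpa using hw
  have hP1eps : ∀ w : F1,
      P1 (furutaEps F10 F11 hc1 w) = furutaEps F10 F11 hc1 (P1 w) := by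
    have main : ∀ (l : ℝ) (u : F1), h1 u = (l : ℂ) • u →
        u ∈ LinearMap.eqLocus (P1 ∘ₗ furutaEps F10 F11 hc1)
          (furutaEps F10 F11 hc1 ∘ₗ P1) := by
      intro l u hu
      rw [LinearMap.mem_eqLocus]
      simp only [LinearMap.comp_apply]
      have heu : h1 (furutaEps F10 F11 hc1 u) = ((-l : ℝ) : ℂ) • furutaEps F10 F11 hc1 u := by
        rw [furutaEps_anticomm hc1 h1 h1odd u, hu, map_smul]
        push_cast
        simp [neg_smul]
      have hPeps : P1 (furutaEps F10 F11 hc1 u) =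
          ((ρ0 ((-l) ^ 2) : ℝ) : ℂ) • furutaEps F10 F11 hc1 u :=
        hP1 _ _ (furuta_eigsq h1 heu)
      have hP1u : P1 u = ((ρ0 (l ^ 2) : ℝ) : ℂ) • u := hP1 _ u (furuta_eigsq h1 hu)
      rw [hPeps, hP1u, map_smul, neg_sq]
    intro w
    have hw := furuta_eigen_ext h1 h1sa _ main w
    rw [LinearMap.mem_eqLocus] at hw
    simpa using hw
  have hflip0 : ∀ {x y : F0}, x = -y → y = -x := by
    intro x y h; rw [h, neg_neg]
  have hflip1 : ∀ {x y : F1}, x = -y → y = -x := by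
    intro x y h; rw [h, neg_neg]
  -- membership consequences
  have hQ0odd1 : ∀ v ∈ F00, Q0 v ∈ F01 := by
    intro v hv
    apply furutaEps_mem_right hc0
    have h := hQ0eps v
    rw [furutaEps_left hc0 hv] at h
    exact hflip0 h
  have hQ0odd2 : ∀ v ∈ F01, Q0 v ∈ F00 := by
    intro v hv
    apply furutaEps_mem_left hc0
    have h := hQ0eps v
    rw [furutaEps_right hc0 hv, map_neg] at h
    exact (neg_injective h).symm
  have hP0even1 : ∀ v ∈ F00, P0 v ∈ F00 := by
    intro v hv
    apply furutaEps_mem_left hc0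
    have h := hP0eps v
    rw [furutaEps_left hc0 hv] at h
    exact h.symm
  have hP0even2 : ∀ v ∈ F01, P0 v ∈ F01 := by
    intro v hv
    apply furutaEps_mem_right hc0
    have h := hP0eps v
    rw [furutaEps_right hc0 hv, map_neg] at h
    exact h.symm
  have hQ1odd1 : ∀ w ∈ F10, Q1 w ∈ F11 := by
    intro w hw
    apply furutaEps_mem_right hc1
    have h := hQ1eps w
    rw [furutaEps_left hc1 hw] at h
    exact hflip1 h
  have hQ1odd2 : ∀ w ∈ F11, Q1 w ∈ F10 := by
    intro w hw
    apply furutaEps_mem_left hc1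
    have h := hQ1eps w
    rw [furutaEps_right hc1 hw, map_neg] at h
    exact (neg_injective h).symm
  have hP1even1 : ∀ w ∈ F10, P1 w ∈ F10 := by
    intro w hw
    apply furutaEps_mem_left hc1
    have h := hP1eps w
    rw [furutaEps_left hc1 hw] at h
    exact h.symm
  have hP1even2 : ∀ w ∈ F11, P1 w ∈ F11 := by
    intro w hw
    apply furutaEps_mem_right hc1
    have h := hP1eps w
    rw [furutaEps_right hc1 hw, map_neg] at h
    exact h.symm
  -- range of P's lies below lam
  have hP0sup : ∀ v : F0,
      P0 v ∈ ⨆ l : {l : ℝ // l < lam}, Module.End.eigenspace (h0 ^ 2) (l : ℂ) := by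
    intro v
    refine Submodule.mem_comap.mp (furuta_eigen_ext h0 h0sa (Submodule.comap P0 _) ?_ v)
    intro l u hu
    rw [Submodule.mem_comap]
    have hu2 := furuta_eigsq h0 hu
    have hP0u : P0 u = ((ρ0 (l ^ 2) : ℝ) : ℂ) • u := hP0 _ u hu2
    by_cases hcl : l ^ 2 < lam
    · rw [hP0u]
      exact Submodule.smul_mem _ _ (Submodule.mem_iSup_of_mem ⟨l ^ 2, hcl⟩ hu2)
    · rw [hP0u, hρ0supp _ (le_of_not_gt hcl)]
      simp
  have hP1sup : ∀ w : F1,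
      P1 w ∈ ⨆ l : {l : ℝ // l < lam}, Module.End.eigenspace (h1 ^ 2) (l : ℂ) := by
    intro w
    refine Submodule.mem_comap.mp (furuta_eigen_ext h1 h1sa (Submodule.comap P1 _) ?_ w)
    intro l u hu
    rw [Submodule.mem_comap]
    have hu2 := furuta_eigsq h1 hu
    have hP1u : P1 u = ((ρ0 (l ^ 2) : ℝ) : ℂ) • u := hP1 _ u hu2
    by_cases hcl : l ^ 2 < lam
    · rw [hP1u]
      exact Submodule.smul_mem _ _ (Submodule.mem_iSup_of_mem ⟨l ^ 2, hcl⟩ hu2)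
    · rw [hP1u, hρ0supp _ (le_of_not_gt hcl)]
      simp
  -- the two parity statements
  have hpar1 : ∀ v w, v ∈ F00 → w ∈ F11 →
      ((htilde P0 Q0 P1 Q1 G G') (v, w)).1 ∈ F01 ∧
        ((htilde P0 Q0 P1 Q1 G G') (v, w)).2 ∈ F10 := by
    intro v w hv hw
    rw [happ]
    constructor
    · exact Submodule.add_mem _ (hQ0odd1 v hv)
        (hG'even.2 (P1 w) (hP1sup w) (hP1even2 w hw))
    · exact Submodule.sub_mem _ (hGeven.1 (P0 v) (hP0sup v) (hP0even1 v hv))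
        (hQ1odd2 w hw)
  have hpar2 : ∀ v w, v ∈ F01 → w ∈ F10 →
      ((htilde P0 Q0 P1 Q1 G G') (v, w)).1 ∈ F00 ∧
        ((htilde P0 Q0 P1 Q1 G G') (v, w)).2 ∈ F11 := by
    intro v w hv hw
    rw [happ]
    constructor
    · exact Submodule.add_mem _ (hQ0odd2 v hv)
        (hG'even.1 (P1 w) (hP1sup w) (hP1even1 w hw))
    · exact Submodule.sub_mem _ (hGeven.2 (P0 v) (hP0sup v) (hP0even2 v hv))
        (hQ1odd1 w hw)
  -- finrank equality
  have hrank : Module.finrank ℂ F00 + Module.finrank ℂ F11 =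
      Module.finrank ℂ F01 + Module.finrank ℂ F10 := by
    let T := htilde P0 Q0 P1 Q1 G G'
    let i0 : (F00 × F11) →ₗ[ℂ] F0 × F1 := (F00.subtype).prodMap (F11.subtype)
    let i1 : (F01 × F10) →ₗ[ℂ] F0 × F1 := (F01.subtype).prodMap (F10.subtype)
    have hf1 : ∀ x : F00 × F11, (T (i0 x)).1 ∈ F01 := fun x =>
      (hpar1 x.1 x.2 x.1.2 x.2.2).1
    have hf2 : ∀ x : F00 × F11, (T (i0 x)).2 ∈ F10 := fun x =>
      (hpar1 x.1 x.2 x.1.2 x.2.2).2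
    have hg1 : ∀ x : F01 × F10, (T (i1 x)).1 ∈ F00 := fun x =>
      (hpar2 x.1 x.2 x.1.2 x.2.2).1
    have hg2 : ∀ x : F01 × F10, (T (i1 x)).2 ∈ F11 := fun x =>
      (hpar2 x.1 x.2 x.1.2 x.2.2).2
    let f : (F00 × F11) →ₗ[ℂ] (F01 × F10) := LinearMap.prod
      (LinearMap.codRestrict F01 ((LinearMap.fst ℂ F0 F1) ∘ₗ T ∘ₗ i0) hf1)
      (LinearMap.codRestrict F10 ((LinearMap.snd ℂ F0 F1) ∘ₗ T ∘ₗ i0) hf2)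
    let g : (F01 × F10) →ₗ[ℂ] (F00 × F11) := LinearMap.prod
      (LinearMap.codRestrict F00 ((LinearMap.fst ℂ F0 F1) ∘ₗ T ∘ₗ i1) hg1)
      (LinearMap.codRestrict F11 ((LinearMap.snd ℂ F0 F1) ∘ₗ T ∘ₗ i1) hg2)
    have hi1f : ∀ x : F00 × F11, i1 (f x) = T (i0 x) := by
      intro x
      simp [i1, f, LinearMap.prod_apply, LinearMap.prodMap_apply, Function.prod, LinearMap.codRestrict_apply]
      rfl
    have hi0g : ∀ x : F01 × F10, i0 (g x) = T (i1 x) := by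
      intro x
      simp [i0, g, LinearMap.prod_apply, LinearMap.prodMap_apply, Function.prod, LinearMap.codRestrict_apply]
      rfl
    have hgf : g.comp f = LinearMap.id := by
      apply LinearMap.ext
      intro x
      have key : T (T (i0 x)) = i0 x := hTT (i0 x)
      refine Prod.ext (Subtype.ext ?_) (Subtype.ext ?_)
      · show ((g (f x)).1 : F0) = (x.1 : F0)
        have : ((g (f x)).1 : F0) = (T (i1 (f x))).1 := by
          simp [g, LinearMap.prod_apply, Function.prod, LinearMap.codRestrict_apply]
          rfl
        rw [this, hi1f, key]
        rfl
      · show ((g (f x)).2 : F1) = (x.2 : F1)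
        have : ((g (f x)).2 : F1) = (T (i1 (f x))).2 := by
          simp [g, LinearMap.prod_apply, Function.prod, LinearMap.codRestrict_apply]
          rfl
        rw [this, hi1f, key]
        rfl
    have hfg : f.comp g = LinearMap.id := by
      apply LinearMap.ext
      intro x
      have key : T (T (i1 x)) = i1 x := hTT (i1 x)
      refine Prod.ext (Subtype.ext ?_) (Subtype.ext ?_)
      · show ((f (g x)).1 : F0) = (x.1 : F0)
        have : ((f (g x)).1 : F0) = (T (i0 (g x))).1 := by
          simp [f, LinearMap.prod_apply, Function.prod, LinearMap.codRestrict_apply]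
          rfl
        rw [this, hi0g, key]
        rfl
      · show ((f (g x)).2 : F1) = (x.2 : F1)
        have : ((f (g x)).2 : F1) = (T (i0 (g x))).2 := by
          simp [f, LinearMap.prod_apply, Function.prod, LinearMap.codRestrict_apply]
          rfl
        rw [this, hi0g, key]
        rfl
    have e : (F00 × F11) ≃ₗ[ℂ] (F01 × F10) := LinearEquiv.ofLinear f g hfg hgf
    have hr := e.finrank_eq
    rwa [Module.finrank_prod, Module.finrank_prod] at hr
  refine ⟨?_, hpar1, hpar2, ?_, hrank⟩
  · apply LinearMap.ext
    intro x
    simpa using hTT x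
  · exact ⟨Function.LeftInverse.injective hTT, Function.RightInverse.surjective hTT⟩
end

section
/- Let X be a topological space, x₀ ∈ X, and π : X → B(Ĥ) a norm-continuous family of finite-rank orthogonal projections with constant rank r near x₀. Let p : Ĥ → F be the orthogonal projection onto F = range π(x₀). Then there is an open neighborhood W of x₀ such that for every x ∈ W, p restricts to a linear isomorphism from range π(x) onto F. -/
/-!
If `‖π x - π x₀‖ < 1` and `u ∈ range π(x)` satisfies `π(x₀) u = 0`, then
`u = (π x - π x₀) u`, so `‖u‖ < ‖u‖` unless `u = 0`: the projection `π(x₀)` is injective on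
`range π(x)`. The image is a subspace of `range π(x₀)` of the same finite dimension `r`,
hence all of it.
-/

open Filter Topology

theorem ContinuousLinearMap.injective_restrict_range_of_norm_sub_lt_one
    {𝕜 E : Type*} [NontriviallyNormedField 𝕜] [NormedAddCommGroup E] [NormedSpace 𝕜 E]
    {P Q : E →L[𝕜] E} (hP : IsIdempotentElem P) (hPQ : ‖P - Q‖ < 1) :
    Function.Injective fun v : LinearMap.range (P : E →ₗ[𝕜] E) => Q v := by
  let f := (Q : E →ₗ[𝕜] E) ∘ₗ (LinearMap.range (P : E →ₗ[𝕜] E)).subtype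
  refine (injective_iff_map_eq_zero f).mpr fun v hv => ?_
  by_contra hne
  have hfix : (P - Q) v = v := by
    have hQv : Q v = 0 := hv
    rw [sub_apply, hQv, sub_zero]
    exact (LinearMap.IsIdempotentElem.mem_range_iff
      (congrArg ContinuousLinearMap.toLinearMap hP)).mp v.2
  have hpos : 0 < ‖(v : E)‖ := norm_pos_iff.mpr (by simpa using hne)
  refine lt_irrefl ‖(v : E)‖ ?_
  calc ‖(v : E)‖ = ‖(P - Q) v‖ := by rw [hfix]
    _ ≤ ‖P - Q‖ * ‖(v : E)‖ := (P - Q).le_opNorm v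
    _ < 1 * ‖(v : E)‖ := mul_lt_mul_of_pos_right hPQ hpos
    _ = ‖(v : E)‖ := one_mul _

theorem Submodule.map_eq_range_of_injective_of_finrank_eq
    {K M N : Type*} [DivisionRing K] [AddCommGroup M] [Module K M] [AddCommGroup N] [Module K N]
    {f : M →ₗ[K] N} {V : Submodule K M} [FiniteDimensional K (LinearMap.range f)]
    (hinj : Function.Injective fun v : V => f v)
    (hrank : Module.finrank K V = Module.finrank K (LinearMap.range f)) :
    V.map f = LinearMap.range f := by
  have hmap : Module.finrank K (V.map f) = Module.finrank K V := by
    rw [← LinearMap.finrank_range_of_inj (f := f ∘ₗ V.subtype) hinj, LinearMap.range_comp,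
      Submodule.range_subtype]
  exact Submodule.eq_of_le_of_finrank_eq LinearMap.map_le_range (hmap.trans hrank)

theorem stmt18_general (X : Type*) [TopologicalSpace X]
    (H : Type*) [NormedAddCommGroup H] [InnerProductSpace ℂ H]
    (π : X → (H →L[ℂ] H)) (hcont : Continuous π)
    (hidem : ∀ x, (π x) ^ 2 = π x)
    (hfin : ∀ x, FiniteDimensional ℂ (LinearMap.range (π x : H →ₗ[ℂ] H)))
    (x₀ : X) (r : ℕ)
    (hrank : ∀ᶠ x in nhds x₀, Module.finrank ℂ (LinearMap.range (π x : H →ₗ[ℂ] H)) = r) :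
    ∃ W : Set X, IsOpen W ∧ x₀ ∈ W ∧ ∀ x ∈ W,
      Function.Injective (fun v : LinearMap.range (π x : H →ₗ[ℂ] H) => (π x₀) (v : H)) ∧
      Submodule.map (π x₀ : H →ₗ[ℂ] H) (LinearMap.range (π x : H →ₗ[ℂ] H)) = LinearMap.range (π x₀ : H →ₗ[ℂ] H) := by
  have hnear : ∀ᶠ x in 𝓝 x₀, ‖π x - π x₀‖ < 1 := by
    simpa only [dist_eq_norm] using Metric.tendsto_nhds.mp hcont.continuousAt 1 one_pos
  obtain ⟨W, hW, hWopen, hx₀W⟩ := eventually_nhds_iff.mp (hnear.and hrank)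
  refine ⟨W, hWopen, hx₀W, fun x hx => ?_⟩
  have hinj := ContinuousLinearMap.injective_restrict_range_of_norm_sub_lt_one
    ((sq (π x)).symm.trans (hidem x)) (hW x hx).1
  have := hfin x₀
  exact ⟨hinj, Submodule.map_eq_range_of_injective_of_finrank_eq hinj
    ((hW x hx).2.trans (hW x₀ hx₀W).2.symm)⟩

/-- Let `π : X → B(Ĥ)` be a norm-continuous family of finite-rank orthogonal projections
of constant rank `r` near `x₀`, and `F = range π(x₀)`. Then on a neighborhood `W` of `x₀`
the orthogonal projection `p` onto `F` (that is, `π(x₀)`) restricts to a linear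
isomorphism from `range π(x)` onto `F` for every `x ∈ W`. -/
theorem stmt18 (X : Type*) [TopologicalSpace X]
    (H : Type*) [NormedAddCommGroup H] [InnerProductSpace ℂ H] [CompleteSpace H]
    (π : X → (H →L[ℂ] H)) (hcont : Continuous π)
    (hsa : ∀ x, IsSelfAdjoint (π x)) (hidem : ∀ x, (π x) ^ 2 = π x)
    (hfin : ∀ x, FiniteDimensional ℂ (LinearMap.range (π x : H →ₗ[ℂ] H)))
    (x₀ : X) (r : ℕ)
    (hrank : ∀ᶠ x in nhds x₀, Module.finrank ℂ (LinearMap.range (π x : H →ₗ[ℂ] H)) = r) :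
    ∃ W : Set X, IsOpen W ∧ x₀ ∈ W ∧ ∀ x ∈ W,
      Function.Injective (fun v : LinearMap.range (π x : H →ₗ[ℂ] H) => (π x₀) (v : H)) ∧
      Submodule.map (π x₀ : H →ₗ[ℂ] H) (LinearMap.range (π x : H →ₗ[ℂ] H)) = LinearMap.range (π x₀ : H →ₗ[ℂ] H) :=
  stmt18_general X H π hcont hidem hfin x₀ r hrank
end
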